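/- Let d ≥ 1 be an integer and let 0 < α < 1 and β > 0 be real numbers with α + β ≥ 1. Let τ₁ > d + 2, set ς = (τ₁ + 1)/(1 − α) and τ = 12τ₁ + 16ς. Let λ ∈ ℝ and let ρ, M > 0, 0 < γ ≤ 1, ε ≥ 0 and K ≥ 2 be real numbers with ε ≤ γ/8, ε·M ≤ 1/4 and γ·K^{τ₁} ≥ 8. Let O ⊆ ℝ^d be Lebesgue measurable and let ω : O → ℝ^d satisfy ‖ω(ξ)‖ ≤ ρ for all ξ ∈ O and ‖ξ − η‖ ≤ M·‖ω(ξ) − ω(η)‖ for all ξ, η ∈ O. For each nonzero n ∈ ℤ let Ω_n : O → ℝ satisfy |Ω_n(ξ) − |n|^α − λ| ≤ ε·|n|^{−2β} for all ξ ∈ O and |Ω_n(ξ) − Ω_n(η)| ≤ ε·|n|^{−2β}·‖ξ − η‖ for all ξ, η ∈ O. Then there is a constant C depending only on d, α, τ₁, ρ and M such that meas(⋃_{k ∈ ℤ^d, 0 < ‖k‖_∞ ≤ K} ⋃_{n, m nonzero integers, |n| ≠ |m|, |n − m| ≤ K} {ξ ∈ O : |⟨k, ω(ξ)⟩| ≥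 γ·K^{−τ₁} and |⟨k, ω(ξ)⟩ + Ω_n(ξ) − Ω_m(ξ)| ≤ γ·K^{−τ}}) ≤ C·γ^{1/4}·K^{−τ₁}. -/

import Mathlib

/-!
Resonances with `|n|, |m| ≥ N := K ^ (τ₁ + 2ς)` are impossible: there the sublinear growth of
`|n| ^ α` and the decay of the drifts give `|Ω_n - Ω_m| ≤ K N ^ (α - 1) + 2 ε N ^ (-2β)`, which lies
below the gap `γ K ^ (-τ₁) - γ K ^ (-τ)` left by the zeroth-order Melnikov condition. This leaves
`O(K ^ d N ^ 2)` triples `(k, n, m)`, each with a resonant set of measure `O(δ)`, `δ = γ K ^ (-τ)`.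
Indeed, since `ε M ≤ 1/4`, each `Ω_n` is `1/4`-Lipschitz as a function of `ω`, so on a resonant
set the differences `ω ξ - ω η` are nearly orthogonal to `k`. A maximal `16 M δ`-separated subset
of the resonant set is therefore mapped by `ω` followed by the orthogonal projection onto `k^⊥` to
an `8 δ`-separated subset of a `ρ`-ball in dimension `d - 1`, which has `O(δ ^ (1 - d))` points,
and the balls of radius `16 M δ` around it cover the resonant set. The choice
`τ = 12 τ₁ + 16 ς` absorbs the factor `K ^ d N ^ 2`.
-/

open MeasureTheory Metric Module RealInnerProductSpace

theorem ncard_le_of_pairwise_lt_dist {E : Type*} [NormedAddCommGroup E] [NormedSpace ℝ E]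
    [FiniteDimensional ℝ E] {C : Set E} (hC : C.Finite) {x : E} {R r : ℝ} (hR : 0 ≤ R)
    (hr : 0 < r) (hCR : C ⊆ closedBall x R) (hsep : C.Pairwise fun a b => r < dist a b) :
    (C.ncard : ℝ) ≤ (1 + 2 * R / r) ^ finrank ℝ E := by
  borelize E
  set μ : Measure E := Measure.addHaar
  have hdisj : (↑hC.toFinset : Set E).PairwiseDisjoint fun a => closedBall a (r / 2) := by
    rw [hC.coe_toFinset]
    refine hsep.mono' fun a b hab => Set.disjoint_left.2 fun z hza hzb => ?_
    have := dist_triangle_right a b z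
    rw [mem_closedBall, dist_comm] at hza hzb
    linarith
  have hunion : (⋃ a ∈ hC.toFinset, closedBall a (r / 2)) ⊆ closedBall x (R + r / 2) := by
    refine Set.iUnion₂_subset fun a ha => closedBall_subset_closedBall' ?_
    have := hCR (hC.mem_toFinset.1 ha)
    rw [mem_closedBall] at this
    linarith
  have hV : μ (ball 0 1) ≠ 0 := (measure_ball_pos μ 0 one_pos).ne'
  have hV' : μ (ball 0 1) ≠ ⊤ := measure_ball_lt_top.ne
  have key : (C.ncard : ENNReal) * ENNReal.ofReal ((r / 2) ^ finrank ℝ E)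
      ≤ ENNReal.ofReal ((R + r / 2) ^ finrank ℝ E) := by
    rw [← ENNReal.mul_le_mul_iff_left hV hV', mul_assoc]
    calc (C.ncard : ENNReal) * (ENNReal.ofReal ((r / 2) ^ finrank ℝ E) * μ (ball 0 1))
        = ∑ a ∈ hC.toFinset, μ (closedBall a (r / 2)) := by
          simp only [Measure.addHaar_closedBall μ _ (half_pos hr).le, Finset.sum_const,
            nsmul_eq_mul, Set.ncard_eq_toFinset_card C hC]
      _ = μ (⋃ a ∈ hC.toFinset, closedBall a (r / 2)) :=
          (measure_biUnion_finset hdisj fun _ _ => measurableSet_closedBall).symm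
      _ ≤ μ (closedBall x (R + r / 2)) := measure_mono hunion
      _ = _ := Measure.addHaar_closedBall μ x (by positivity)
  rw [← ENNReal.ofReal_natCast, ← ENNReal.ofReal_mul (by positivity),
    ENNReal.ofReal_le_ofReal_iff (by positivity)] at key
  calc (C.ncard : ℝ) ≤ (R + r / 2) ^ finrank ℝ E / (r / 2) ^ finrank ℝ E :=
        (le_div_iff₀ (by positivity)).2 key
    _ = (1 + 2 * R / r) ^ finrank ℝ E := by
        rw [← div_pow]; congr 1; field_simp; ring

theorem norm_sq_orthogonalProjectionOnto_orthogonal_span_singleton {E : Type*}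
    [NormedAddCommGroup E] [InnerProductSpace ℝ E] {e : E} (he : ‖e‖ = 1) (v : E) :
    ‖(ℝ ∙ e)ᗮ.orthogonalProjectionOnto v‖ ^ 2 = ‖v‖ ^ 2 - ⟪e, v⟫ ^ 2 := by
  have h := Submodule.norm_sq_eq_add_norm_sq_projection v (ℝ ∙ e)
  have hproj : ‖(ℝ ∙ e).orthogonalProjectionOnto v‖ = |⟪e, v⟫| := by
    rw [← Submodule.norm_coe, ← Submodule.starProjection_apply,
      Submodule.starProjection_unit_singleton ℝ he, norm_smul, he, mul_one, Real.norm_eq_abs]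
  rw [hproj, sq_abs] at h
  linarith

theorem ncard_le_of_pairwise_lt_dist_of_abs_inner_le {E : Type*} [NormedAddCommGroup E]
    [InnerProductSpace ℝ E] [FiniteDimensional ℝ E] {e : E} (he : ‖e‖ = 1) {C : Set E}
    (hC : C.Finite) {ρ δ : ℝ} (hρ : 0 ≤ ρ) (hδ : 0 < δ) (hCρ : C ⊆ closedBall 0 ρ)
    (hsep : C.Pairwise fun x y => 8 * δ < dist x y)
    (hflat : ∀ x ∈ C, ∀ y ∈ C, |⟪e, x - y⟫| ≤ δ + ‖x - y‖ / 2) :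
    (C.ncard : ℝ) ≤ (1 + ρ / (2 * δ)) ^ (finrank ℝ E - 1) := by
  set p := (ℝ ∙ e)ᗮ.orthogonalProjectionOnto
  have hp_sep : C.Pairwise fun x y => 4 * δ < dist (p x) (p y) := by
    -- `|⟪e, x - y⟫| < 5 ‖x - y‖ / 8`, so `‖p (x - y)‖ ^ 2 > 39 ‖x - y‖ ^ 2 / 64 > 16 δ ^ 2`
    intro x hx y hy hne
    have hxy : 8 * δ < dist x y := hsep hx hy hne
    have hproj := norm_sq_orthogonalProjectionOnto_orthogonal_span_singleton he (x - y)
    have hinner := abs_le.1 (hflat x hx y hy)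
    rw [dist_eq_norm] at hxy ⊢
    rw [← map_sub]
    show 4 * δ < ‖p (x - y)‖
    nlinarith [norm_nonneg (p (x - y))]
  have hfinrank : finrank ℝ (ℝ ∙ e)ᗮ = finrank ℝ E - 1 := by
    have := Submodule.finrank_add_finrank_orthogonal (ℝ ∙ e)
    rw [finrank_span_singleton (by rintro rfl; simp at he)] at this
    omega
  have hinj : C.InjOn p := fun x hx y hy hpxy => by
    by_contra hxy
    have : 4 * δ < dist (p x) (p y) := hp_sep hx hy hxy
    rw [hpxy, dist_self] at this
    linarith
  have hball : p '' C ⊆ closedBall 0 ρ := by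
    rintro _ ⟨x, hx, rfl⟩
    have := hCρ hx
    rw [mem_closedBall_zero_iff] at this ⊢
    exact (Submodule.norm_orthogonalProjectionOnto_apply_le _ x).trans this
  have := ncard_le_of_pairwise_lt_dist (hC.image p) hρ (by positivity) hball
    (Set.InjOn.pairwise_image hinj |>.2 hp_sep)
  rw [hinj.ncard_image, hfinrank] at this
  convert this using 3
  field_simp
  ring

theorem isSeparated_ofReal_iff {X : Type*} [MetricSpace X] {r : ℝ} {s : Set X} :
    IsSeparated (ENNReal.ofReal r) s ↔ s.Pairwise fun x y => r < dist x y := by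
  refine forall₂_congr fun x _ => forall₂_congr fun y _ => forall_congr' fun hxy => ?_
  dsimp only
  rw [edist_dist, ENNReal.ofReal_lt_ofReal_iff', and_iff_left (dist_pos.2 hxy)]

theorem measure_le_of_forall_pairwise_lt_dist {E : Type*} [NormedAddCommGroup E]
    [MeasurableSpace E] [BorelSpace E] (μ : Measure E) [μ.IsAddHaarMeasure] {A : Set E}
    {r B : ℝ} (hr : 0 ≤ r)
    (hA : ∀ C ⊆ A, C.Finite → (C.Pairwise fun x y => r < dist x y) → (C.ncard : ℝ) ≤ B) :
    μ A ≤ ENNReal.ofReal B * μ (closedBall 0 r) := by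
  have hsep : ∀ C ⊆ A, IsSeparated r.toNNReal C → C.encard ≤ ⌊B⌋₊ := by
    intro C hCA hC
    by_contra! hlt
    obtain ⟨D, hDC, hD⟩ := Set.exists_subset_encard_eq (Order.add_one_le_of_lt hlt)
    have hDfin : D.Finite := Set.finite_of_encard_eq_coe hD
    have := hA D (hDC.trans hCA) hDfin (isSeparated_ofReal_iff.1 (hC.subset hDC))
    rw [Set.ncard_def, hD, ← Nat.cast_add_one, ENat.toNat_natCast, Nat.cast_add_one] at this
    linarith [Nat.lt_floor_add_one B]
  have hpack : packingNumber r.toNNReal A ≠ ⊤ :=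
    ne_top_of_le_ne_top (ENat.natCast_ne_top ⌊B⌋₊) (iSup₂_le fun C hCA => iSup_le (hsep C hCA))
  set S := maximalSeparatedSet r.toNNReal A
  have hSfin : S.Finite :=
    Set.encard_ne_top_iff.1 (encard_maximalSeparatedSet hpack ▸ hpack)
  have hcover : A ⊆ ⋃ y ∈ hSfin.toFinset, closedBall y r := by
    simpa [max_eq_left hr] using (isCover_maximalSeparatedSet hpack).subset_iUnion_closedBall
  calc μ A ≤ ∑ y ∈ hSfin.toFinset, μ (closedBall y r) :=
        (measure_mono hcover).trans (measure_biUnion_finset_le _ _)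
    _ = S.ncard * μ (closedBall 0 r) := by
        simp only [Measure.addHaar_closedBall_center μ, Finset.sum_const, nsmul_eq_mul,
          Set.ncard_eq_toFinset_card S hSfin]
    _ ≤ ENNReal.ofReal B * μ (closedBall 0 r) := by
        gcongr
        rw [← ENNReal.ofReal_natCast]
        exact ENNReal.ofReal_le_ofReal (hA S maximalSeparatedSet_subset hSfin
          (isSeparated_ofReal_iff.1 isSeparated_maximalSeparatedSet))

theorem measure_le_of_antilipschitz_of_abs_inner_le {F E : Type*} [NormedAddCommGroup F]
    [MeasurableSpace F] [BorelSpace F] (μ : Measure F) [μ.IsAddHaarMeasure]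
    [NormedAddCommGroup E] [InnerProductSpace ℝ E] [FiniteDimensional ℝ E]
    {A : Set F} {φ : F → E} {e : E} (he : ‖e‖ = 1) {M ρ δ : ℝ} (hM : 0 < M) (hρ : 0 ≤ ρ)
    (hδ : 0 < δ) (hanti : ∀ ξ ∈ A, ∀ η ∈ A, ‖ξ - η‖ ≤ M * ‖φ ξ - φ η‖)
    (hbdd : ∀ ξ ∈ A, ‖φ ξ‖ ≤ ρ)
    (hflat : ∀ ξ ∈ A, ∀ η ∈ A, |⟪e, φ ξ - φ η⟫| ≤ δ + ‖φ ξ - φ η‖ / 2) :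
    μ A ≤ ENNReal.ofReal ((1 + ρ / (2 * δ)) ^ (finrank ℝ E - 1)) *
      μ (closedBall 0 (8 * M * δ)) := by
  refine measure_le_of_forall_pairwise_lt_dist μ (by positivity) fun C hCA hC hsep => ?_
  have hsep' : C.Pairwise fun ξ η => 8 * δ < dist (φ ξ) (φ η) := by
    intro ξ hξ η hη hne
    have h := hanti ξ (hCA hξ) η (hCA hη)
    have h' : 8 * M * δ < ‖ξ - η‖ := by simpa [dist_eq_norm] using hsep hξ hη hne
    rw [dist_eq_norm]
    nlinarith
  have hinj : C.InjOn φ := fun ξ hξ η hη hφ => by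
    by_contra hne
    have : 8 * δ < dist (φ ξ) (φ η) := hsep' hξ hη hne
    rw [hφ, dist_self] at this
    linarith
  rw [← hinj.ncard_image]
  refine ncard_le_of_pairwise_lt_dist_of_abs_inner_le he (hC.image φ) hρ hδ ?_
    (hinj.pairwise_image.2 hsep') ?_
  · rintro _ ⟨ξ, hξ, rfl⟩
    exact mem_closedBall_zero_iff.2 (hbdd ξ (hCA hξ))
  · rintro _ ⟨ξ, hξ, rfl⟩ _ ⟨η, hη, rfl⟩
    exact hflat ξ (hCA hξ) η (hCA hη)

theorem rpow_sub_rpow_le_of_le {α a b : ℝ} (hα1 : α ≤ 1) (hb : 0 < b)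
    (hba : b ≤ a) : a ^ α - b ^ α ≤ (a - b) * b ^ (α - 1) := by
  have hab : 1 ≤ a / b := (one_le_div hb).2 hba
  have h : (a / b) ^ α ≤ a / b := by
    simpa using Real.rpow_le_rpow_of_exponent_le hab hα1
  have ha : a ^ α = b ^ α * (a / b) ^ α := by
    rw [← Real.mul_rpow hb.le (by positivity), mul_div_cancel₀ _ hb.ne']
  have hb' : b ^ α = b * b ^ (α - 1) := by
    rw [Real.rpow_sub hb, Real.rpow_one, mul_div_cancel₀ _ hb.ne']
  calc a ^ α - b ^ α ≤ b ^ α * (a / b) - b ^ α := by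
        rw [ha]; gcongr
    _ = (a - b) * b ^ (α - 1) := by
        rw [hb']; field_simp

theorem abs_rpow_sub_rpow_le {α a b N : ℝ} (hα0 : 0 ≤ α) (hα1 : α ≤ 1) (hN : 0 < N)
    (ha : N ≤ a) (hb : N ≤ b) : |a ^ α - b ^ α| ≤ |a - b| * N ^ (α - 1) := by
  wlog hba : b ≤ a generalizing a b
  · rw [abs_sub_comm, abs_sub_comm a]
    exact this hb ha (le_of_not_ge hba)
  have hmono : b ^ α ≤ a ^ α := Real.rpow_le_rpow (hN.trans_le hb).le hba hα0
  rw [abs_of_nonneg (sub_nonneg.2 hmono), abs_of_nonneg (sub_nonneg.2 hba)]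
  calc a ^ α - b ^ α ≤ (a - b) * b ^ (α - 1) :=
        rpow_sub_rpow_le_of_le hα1 (hN.trans_le hb) hba
    _ ≤ (a - b) * N ^ (α - 1) :=
        mul_le_mul_of_nonneg_left (Real.rpow_le_rpow_of_nonpos hN hb (by linarith))
          (sub_nonneg.2 hba)

theorem abs_sub_le_of_abs_sub_rpow_le {α β ε c N p q u v : ℝ} (hα0 : 0 ≤ α) (hα1 : α ≤ 1)
    (hβ : 0 ≤ β) (hε : 0 ≤ ε) (hN : 0 < N) (hp : N ≤ p) (hq : N ≤ q)
    (hu : |u - p ^ α - c| ≤ ε * p ^ (-β)) (hv : |v - q ^ α - c| ≤ ε * q ^ (-β)) :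
    |u - v| ≤ |p - q| * N ^ (α - 1) + 2 * ε * N ^ (-β) := by
  have hpq := abs_le.1 (abs_rpow_sub_rpow_le hα0 hα1 hN hp hq)
  have hp' : ε * p ^ (-β) ≤ ε * N ^ (-β) :=
    mul_le_mul_of_nonneg_left (Real.rpow_le_rpow_of_nonpos hN hp (neg_nonpos.2 hβ)) hε
  have hq' : ε * q ^ (-β) ≤ ε * N ^ (-β) :=
    mul_le_mul_of_nonneg_left (Real.rpow_le_rpow_of_nonpos hN hq (neg_nonpos.2 hβ)) hε
  have hu' := abs_le.1 hu
  have hv' := abs_le.1 hv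
  rw [abs_le]
  constructor <;> linarith

theorem rpow_neg_abs_intCast_le_one {n : ℤ} (hn : n ≠ 0) {s : ℝ} (hs : 0 ≤ s) :
    (|n| : ℝ) ^ (-s) ≤ 1 :=
  Real.rpow_le_one_of_one_le_of_nonpos (by exact_mod_cast Int.one_le_abs hn) (neg_nonpos.2 hs)

theorem rpow_le_rpow_div_two {K x y : ℝ} (hK : 2 ≤ K) (hxy : x ≤ y - 1) : K ^ x ≤ K ^ y / 2 := by
  have hK0 : 0 < K := by linarith
  calc K ^ x ≤ K ^ (y - 1) := Real.rpow_le_rpow_of_exponent_le (by linarith) hxy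
    _ = K ^ y / K := by rw [Real.rpow_sub hK0, Real.rpow_one]
    _ ≤ K ^ y / 2 := div_le_div_of_nonneg_left (by positivity) two_pos hK

theorem large_freq_bound_lt_gap {α β τ₁ ς τ γ ε K : ℝ} (hα0 : 0 ≤ α) (hα1 : α < 1) (hαβ : 1 ≤ α + β)
    (hτ₁ : 0 < τ₁) (hς : ς = (τ₁ + 1) / (1 - α)) (hτ : τ = 12 * τ₁ + 16 * ς) (hγ : 0 < γ)
    (hε : 0 ≤ ε) (hεγ : ε ≤ γ / 8) (hK : 2 ≤ K) (hγK : γ * K ^ τ₁ ≥ 8) :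
    K * (K ^ (τ₁ + 2 * ς)) ^ (α - 1) + 2 * ε * (K ^ (τ₁ + 2 * ς)) ^ (-(2 * β)) <
      γ * K ^ (-τ₁) - γ * K ^ (-τ) := by
  have hK0 : 0 < K := by linarith
  have hς0 : 0 < ς := by rw [hς]; exact div_pos (by linarith) (by linarith)
  have hςα : (1 - α) * ς = τ₁ + 1 := by rw [hς, mul_div_cancel₀ _ (by linarith)]
  have hς1 : τ₁ + 1 ≤ ς := by nlinarith
  have hKτ₁ : K ^ (-τ₁) ≤ γ / 8 := by
    rw [Real.rpow_neg hK0.le, inv_le_iff_one_le_mul₀ (by positivity)]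
    linarith
  have hpos : 0 < K ^ (-τ₁) := by positivity
  have h₁ : K * (K ^ (τ₁ + 2 * ς)) ^ (α - 1) ≤ γ / 8 * K ^ (-τ₁) := by
    rw [← Real.rpow_mul hK0.le, ← Real.rpow_one_add' hK0.le (by nlinarith)]
    calc K ^ (1 + (τ₁ + 2 * ς) * (α - 1)) ≤ K ^ (-τ₁ + -τ₁) :=
          Real.rpow_le_rpow_of_exponent_le (by linarith) (by nlinarith)
      _ ≤ γ / 8 * K ^ (-τ₁) := by
          rw [Real.rpow_add hK0]; exact mul_le_mul_of_nonneg_right hKτ₁ hpos.le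
  have h₂ : (K ^ (τ₁ + 2 * ς)) ^ (-(2 * β)) ≤ K ^ (-τ₁) / 2 := by
    rw [← Real.rpow_mul hK0.le]
    exact rpow_le_rpow_div_two hK (by nlinarith)
  have h₃ : K ^ (-τ) ≤ K ^ (-τ₁) / 2 := rpow_le_rpow_div_two hK (by rw [hτ]; linarith)
  nlinarith

theorem one_add_div_pow_mul_pow_le {d : ℕ} (hd : 1 ≤ d) {ρ c δ : ℝ} (hρ : 0 ≤ ρ) (hc : 0 ≤ c)
    (hδ : 0 < δ) (hδ1 : δ ≤ 1) :
    (1 + ρ / (4 * δ)) ^ (d - 1) * (c * δ) ^ d ≤ (1 + ρ / 4) ^ (d - 1) * c ^ d * δ := by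
  obtain ⟨d, rfl⟩ := Nat.exists_eq_add_of_le' hd
  have h : (1 + ρ / (4 * δ)) * δ ≤ 1 + ρ / 4 := by
    rw [add_mul, one_mul, div_mul_eq_mul_div, mul_div_mul_right _ _ hδ.ne']
    linarith
  calc (1 + ρ / (4 * δ)) ^ d * (c * δ) ^ (d + 1)
      = ((1 + ρ / (4 * δ)) * δ) ^ d * c ^ (d + 1) * δ := by rw [mul_pow, mul_pow]; ring
    _ ≤ (1 + ρ / 4) ^ d * c ^ (d + 1) * δ := by gcongr

theorem box_count_mul_le {d : ℕ} {τ₁ ς τ γ K C : ℝ} (hτ₁ : d + 2 < τ₁) (hς : 0 ≤ ς)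
    (hτ : τ = 12 * τ₁ + 16 * ς) (hγ : 0 < γ) (hγ1 : γ ≤ 1) (hK : 2 ≤ K) (hC : 0 ≤ C) :
    (2 * K + 1) ^ d * (2 * (K ^ (τ₁ + 2 * ς) + K) + 3) ^ 2 * (C * (γ * K ^ (-τ))) ≤
      49 * 3 ^ d * C * γ ^ ((1 : ℝ) / 4) * K ^ (-τ₁) := by
  have hK0 : 0 < K := by linarith
  have hd : (0 : ℝ) ≤ d := Nat.cast_nonneg d
  set N := K ^ (τ₁ + 2 * ς)
  have hN : K ≤ N := by
    simpa using Real.rpow_le_rpow_of_exponent_le (by linarith : 1 ≤ K)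
      (by linarith : (1 : ℝ) ≤ τ₁ + 2 * ς)
  have h₁ : (2 * K + 1) ^ d ≤ 3 ^ d * K ^ d := by
    rw [← mul_pow]; gcongr; linarith
  have h₂ : (2 * (N + K) + 3) ^ 2 ≤ 49 * N ^ 2 := by nlinarith
  have h₃ : K ^ d * N ^ 2 * K ^ (-τ) ≤ K ^ (-τ₁) := by
    rw [← Real.rpow_natCast, ← Real.rpow_natCast N, ← Real.rpow_mul hK0.le,
      ← Real.rpow_add hK0, ← Real.rpow_add hK0]
    exact Real.rpow_le_rpow_of_exponent_le (by linarith) (by push_cast; linarith)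
  have h₄ : γ ≤ γ ^ ((1 : ℝ) / 4) := by
    simpa using Real.rpow_le_rpow_of_exponent_ge hγ hγ1 (by norm_num : (1 : ℝ) / 4 ≤ 1)
  calc (2 * K + 1) ^ d * (2 * (N + K) + 3) ^ 2 * (C * (γ * K ^ (-τ)))
      ≤ (3 ^ d * K ^ d) * (49 * N ^ 2) * (C * (γ * K ^ (-τ))) := by gcongr
    _ = 49 * 3 ^ d * C * γ * (K ^ d * N ^ 2 * K ^ (-τ)) := by ring
    _ ≤ 49 * 3 ^ d * C * γ ^ ((1 : ℝ) / 4) * K ^ (-τ₁) := by gcongr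

section Resonance

variable {d : ℕ} {X : Type*}

def resonantSet (O : Set X) (ω : X → EuclideanSpace ℝ (Fin d)) (Ω : ℤ → X → ℝ) (a b : ℝ)
    (k : Fin d → ℤ) (n m : ℤ) : Set X :=
  {ξ ∈ O | |∑ i, (k i : ℝ) * ω ξ i| ≥ a ∧ |(∑ i, (k i : ℝ) * ω ξ i) + Ω n ξ - Ω m ξ| ≤ b}

theorem resonantSet_eq_empty {O : Set X} {ω : X → EuclideanSpace ℝ (Fin d)} {Ω : ℤ → X → ℝ}
    {a b : ℝ} {n m : ℤ} (h : ∀ ξ ∈ O, |Ω n ξ - Ω m ξ| < a - b) (k : Fin d → ℤ) :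
    resonantSet O ω Ω a b k n m = ∅ := by
  refine Set.eq_empty_of_forall_notMem fun ξ ⟨hξ, hsmall, hres⟩ => ?_
  rw [add_sub_assoc] at hres
  have := abs_sub (∑ i, (k i : ℝ) * ω ξ i + (Ω n ξ - Ω m ξ)) (Ω n ξ - Ω m ξ)
  rw [add_sub_cancel_right] at this
  linarith [h ξ hξ]

theorem inner_toLp_intCast (k : Fin d → ℤ) (x : EuclideanSpace ℝ (Fin d)) :
    ⟪(WithLp.toLp 2 fun i => (k i : ℝ) : EuclideanSpace ℝ (Fin d)), x⟫ = ∑ i, (k i : ℝ) * x i := by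
  simp [PiLp.inner_apply, mul_comm]

theorem one_le_norm_toLp_intCast {k : Fin d → ℤ} (hk : k ≠ 0) :
    1 ≤ ‖(WithLp.toLp 2 fun i => (k i : ℝ) : EuclideanSpace ℝ (Fin d))‖ := by
  obtain ⟨i, hi⟩ := Function.ne_iff.1 hk
  calc (1 : ℝ) ≤ |(k i : ℝ)| := by exact_mod_cast Int.one_le_abs hi
    _ ≤ _ := PiLp.norm_apply_le (WithLp.toLp 2 fun i => (k i : ℝ)) i

theorem measure_resonantSet_le {F : Type*} [NormedAddCommGroup F] [MeasurableSpace F]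
    [BorelSpace F] (μ : Measure F) [μ.IsAddHaarMeasure] {O : Set F}
    {ω : F → EuclideanSpace ℝ (Fin d)} {Ω : ℤ → F → ℝ} {a b M ρ ε : ℝ} {k : Fin d → ℤ}
    {n m : ℤ} (hk : k ≠ 0) (hM : 0 < M) (hρ : 0 ≤ ρ) (hb : 0 < b) (hε : 0 ≤ ε)
    (hεM : ε * M ≤ 1 / 4) (hωρ : ∀ ξ ∈ O, ‖ω ξ‖ ≤ ρ)
    (hωM : ∀ ξ ∈ O, ∀ η ∈ O, ‖ξ - η‖ ≤ M * ‖ω ξ - ω η‖)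
    (hn : ∀ ξ ∈ O, ∀ η ∈ O, |Ω n ξ - Ω n η| ≤ ε * ‖ξ - η‖)
    (hm : ∀ ξ ∈ O, ∀ η ∈ O, |Ω m ξ - Ω m η| ≤ ε * ‖ξ - η‖) :
    μ (resonantSet O ω Ω a b k n m) ≤
      ENNReal.ofReal ((1 + ρ / (4 * b)) ^ (d - 1)) * μ (closedBall 0 (16 * M * b)) := by
  set kv : EuclideanSpace ℝ (Fin d) := WithLp.toLp 2 fun i => (k i : ℝ)
  have hkv : 1 ≤ ‖kv‖ := one_le_norm_toLp_intCast hk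
  have he : ‖‖kv‖⁻¹ • kv‖ = 1 := by
    rw [norm_smul, norm_inv, norm_norm, inv_mul_cancel₀ (by positivity)]
  have hsub : resonantSet O ω Ω a b k n m ⊆ O := fun ξ hξ => hξ.1
  have hflat : ∀ ξ ∈ resonantSet O ω Ω a b k n m, ∀ η ∈ resonantSet O ω Ω a b k n m,
      |⟪‖kv‖⁻¹ • kv, ω ξ - ω η⟫| ≤ 2 * b + ‖ω ξ - ω η‖ / 2 := by
    rintro ξ ⟨hξ, -, hξb⟩ η ⟨hη, -, hηb⟩
    have hinner : ⟪kv, ω ξ - ω η⟫ =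
        ((∑ i, (k i : ℝ) * ω ξ i) + Ω n ξ - Ω m ξ) - ((∑ i, (k i : ℝ) * ω η i) + Ω n η - Ω m η)
          - (Ω n ξ - Ω n η) + (Ω m ξ - Ω m η) := by
      rw [inner_sub_right, inner_toLp_intCast, inner_toLp_intCast]
      ring
    have hlip : ε * ‖ξ - η‖ ≤ ‖ω ξ - ω η‖ / 4 := by
      nlinarith [hωM ξ hξ η hη, norm_nonneg (ω ξ - ω η)]
    have hkv_flat : |⟪kv, ω ξ - ω η⟫| ≤ 2 * b + ‖ω ξ - ω η‖ / 2 := by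
      rw [hinner]
      have := abs_le.1 hξb
      have := abs_le.1 hηb
      have := abs_le.1 (hn ξ hξ η hη)
      have := abs_le.1 (hm ξ hξ η hη)
      rw [abs_le]
      constructor <;> linarith
    rw [real_inner_smul_left, abs_mul, abs_inv, abs_norm]
    calc ‖kv‖⁻¹ * |⟪kv, ω ξ - ω η⟫| ≤ |⟪kv, ω ξ - ω η⟫| :=
          mul_le_of_le_one_left (abs_nonneg _) (inv_le_one_of_one_le₀ hkv)
      _ ≤ _ := hkv_flat
  have := measure_le_of_antilipschitz_of_abs_inner_le μ he hM hρ (by positivity : 0 < 2 * b)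
    (fun ξ hξ η hη => hωM ξ (hsub hξ) η (hsub hη)) (fun ξ hξ => hωρ ξ (hsub hξ)) hflat
  rwa [finrank_euclideanSpace_fin, show 2 * (2 * b) = 4 * b by ring,
    show 8 * M * (2 * b) = 16 * M * b by ring] at this

theorem volume_resonantSet_le (hd : 1 ≤ d) {O : Set (EuclideanSpace ℝ (Fin d))}
    {ω : EuclideanSpace ℝ (Fin d) → EuclideanSpace ℝ (Fin d)}
    {Ω : ℤ → EuclideanSpace ℝ (Fin d) → ℝ} {a b M ρ ε : ℝ} {k : Fin d → ℤ} {n m : ℤ}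
    (hk : k ≠ 0) (hM : 0 < M) (hρ : 0 ≤ ρ) (hb : 0 < b) (hb1 : b ≤ 1) (hε : 0 ≤ ε)
    (hεM : ε * M ≤ 1 / 4) (hωρ : ∀ ξ ∈ O, ‖ω ξ‖ ≤ ρ)
    (hωM : ∀ ξ ∈ O, ∀ η ∈ O, ‖ξ - η‖ ≤ M * ‖ω ξ - ω η‖)
    (hn : ∀ ξ ∈ O, ∀ η ∈ O, |Ω n ξ - Ω n η| ≤ ε * ‖ξ - η‖)
    (hm : ∀ ξ ∈ O, ∀ η ∈ O, |Ω m ξ - Ω m η| ≤ ε * ‖ξ - η‖) :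
    volume (resonantSet O ω Ω a b k n m) ≤ ENNReal.ofReal ((1 + ρ / 4) ^ (d - 1) * (16 * M) ^ d *
      (volume (ball (0 : EuclideanSpace ℝ (Fin d)) 1)).toReal * b) := by
  set V := (volume (ball (0 : EuclideanSpace ℝ (Fin d)) 1)).toReal
  have hball : volume (ball (0 : EuclideanSpace ℝ (Fin d)) 1) = ENNReal.ofReal V :=
    (ENNReal.ofReal_toReal measure_ball_lt_top.ne).symm
  refine (measure_resonantSet_le volume hk hM hρ hb hε hεM hωρ hωM hn hm).trans ?_
  rw [Measure.addHaar_closedBall _ _ (by positivity), finrank_euclideanSpace_fin, hball,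
    ← mul_assoc, ← ENNReal.ofReal_mul (by positivity), ← ENNReal.ofReal_mul (by positivity)]
  refine ENNReal.ofReal_le_ofReal ?_
  calc (1 + ρ / (4 * b)) ^ (d - 1) * (16 * M * b) ^ d * V
      ≤ (1 + ρ / 4) ^ (d - 1) * (16 * M) ^ d * b * V :=
        mul_le_mul_of_nonneg_right (one_add_div_pow_mul_pow_le hd hρ (by positivity) hb hb1)
          ENNReal.toReal_nonneg
    _ = (1 + ρ / 4) ^ (d - 1) * (16 * M) ^ d * V * b := by ring

theorem resonantSet_eq_empty_of_le_abs {O : Set X} {ω : X → EuclideanSpace ℝ (Fin d)}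
    {Ω : ℤ → X → ℝ} {α β τ₁ ς τ γ ε K lam : ℝ} (hα0 : 0 ≤ α) (hα1 : α < 1) (hαβ : 1 ≤ α + β)
    (hτ₁ : 0 < τ₁) (hς : ς = (τ₁ + 1) / (1 - α)) (hτ : τ = 12 * τ₁ + 16 * ς) (hγ : 0 < γ)
    (hε : 0 ≤ ε) (hεγ : ε ≤ γ / 8) (hK : 2 ≤ K) (hγK : γ * K ^ τ₁ ≥ 8)
    (hΩ : ∀ n : ℤ, n ≠ 0 → ∀ ξ ∈ O, |Ω n ξ - (|n| : ℝ) ^ α - lam| ≤ ε * (|n| : ℝ) ^ (-(2 * β)))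
    {n m : ℤ} (hn : n ≠ 0) (hm : m ≠ 0) (hnN : K ^ (τ₁ + 2 * ς) ≤ |(n : ℝ)|)
    (hmN : K ^ (τ₁ + 2 * ς) ≤ |(m : ℝ)|) (hnm : |(n : ℝ) - m| ≤ K) (k : Fin d → ℤ) :
    resonantSet O ω Ω (γ * K ^ (-τ₁)) (γ * K ^ (-τ)) k n m = ∅ := by
  refine resonantSet_eq_empty (fun ξ hξ => ?_) k
  have hK0 : 0 < K := by linarith
  calc |Ω n ξ - Ω m ξ|
      ≤ |(|(n : ℝ)| - |(m : ℝ)|)| * (K ^ (τ₁ + 2 * ς)) ^ (α - 1) +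
          2 * ε * (K ^ (τ₁ + 2 * ς)) ^ (-(2 * β)) :=
        abs_sub_le_of_abs_sub_rpow_le hα0 hα1.le (by linarith) hε (by positivity) hnN hmN
          (hΩ n hn ξ hξ) (hΩ m hm ξ hξ)
    _ ≤ K * (K ^ (τ₁ + 2 * ς)) ^ (α - 1) + 2 * ε * (K ^ (τ₁ + 2 * ς)) ^ (-(2 * β)) := by
        gcongr
        exact (abs_abs_sub_abs_le_abs_sub _ _).trans hnm
    _ < γ * K ^ (-τ₁) - γ * K ^ (-τ) :=
        large_freq_bound_lt_gap hα0 hα1 hαβ hτ₁ hς hτ hγ hε hεγ hK hγK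

end Resonance

noncomputable def freqBox (d : ℕ) (K L : ℝ) : Finset ((Fin d → ℤ) × ℤ × ℤ) :=
  {t ∈ Fintype.piFinset (fun _ => Finset.Icc (-⌊K⌋) ⌊K⌋) ×ˢ
      (Finset.Icc (-⌈L⌉) ⌈L⌉ ×ˢ Finset.Icc (-⌈L⌉) ⌈L⌉) | t.1 ≠ 0 ∧ t.2.1 ≠ 0 ∧ t.2.2 ≠ 0}

theorem card_Icc_neg_le {z : ℤ} {r : ℝ} (hr : 0 ≤ r) (hz : (z : ℝ) ≤ r) :
    ((Finset.Icc (-z) z).card : ℝ) ≤ 2 * r + 1 := by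
  rw [Int.card_Icc]
  rcases le_or_gt 0 (z + 1 - -z) with h | h
  · rw [← Int.cast_natCast, Int.toNat_of_nonneg h]
    push_cast
    linarith
  · rw [Int.toNat_of_nonpos h.le]
    push_cast
    linarith

theorem card_freqBox_le {d : ℕ} {K L : ℝ} (hK : 0 ≤ K) (hL : 0 ≤ L) :
    ((freqBox d K L).card : ℝ) ≤ (2 * K + 1) ^ d * (2 * L + 3) ^ 2 := by
  have hcard : (freqBox d K L).card ≤ (Finset.Icc (-⌊K⌋) ⌊K⌋).card ^ d *
      ((Finset.Icc (-⌈L⌉) ⌈L⌉).card * (Finset.Icc (-⌈L⌉) ⌈L⌉).card) := by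
    refine (Finset.card_filter_le _ _).trans_eq ?_
    rw [Finset.card_product, Finset.card_product, Fintype.card_piFinset, Finset.prod_const,
      Finset.card_univ, Fintype.card_fin]
  have hK' := card_Icc_neg_le hK (Int.floor_le K)
  have hL' := card_Icc_neg_le (by positivity) ((Int.ceil_lt_add_one L).le)
  calc ((freqBox d K L).card : ℝ) ≤ ((Finset.Icc (-⌊K⌋) ⌊K⌋).card : ℝ) ^ d *
        (((Finset.Icc (-⌈L⌉) ⌈L⌉).card : ℝ) * (Finset.Icc (-⌈L⌉) ⌈L⌉).card) := by
        exact_mod_cast hcard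
    _ ≤ (2 * K + 1) ^ d * ((2 * (L + 1) + 1) * (2 * (L + 1) + 1)) := by
        gcongr
    _ = (2 * K + 1) ^ d * (2 * L + 3) ^ 2 := by ring

theorem ne_zero_of_mem_freqBox {d : ℕ} {K L : ℝ} {t : (Fin d → ℤ) × ℤ × ℤ}
    (ht : t ∈ freqBox d K L) : t.1 ≠ 0 ∧ t.2.1 ≠ 0 ∧ t.2.2 ≠ 0 :=
  (Finset.mem_filter.1 ht).2

theorem mem_freqBox {d : ℕ} {K L : ℝ} {k : Fin d → ℤ} {n m : ℤ} (hk : k ≠ 0) (hn : n ≠ 0)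
    (hm : m ≠ 0) (hkK : ∀ i, (|k i| : ℝ) ≤ K) (hnL : (|n| : ℝ) ≤ L) (hmL : (|m| : ℝ) ≤ L) :
    (k, n, m) ∈ freqBox d K L := by
  have hIcc (j : ℤ) (r : ℝ) (h : (|j| : ℝ) ≤ r) : j ∈ Finset.Icc (-⌈r⌉) ⌈r⌉ := by
    have : ((|j| : ℤ) : ℝ) ≤ ⌈r⌉ := by push_cast; exact h.trans (Int.le_ceil r)
    exact Finset.mem_Icc.2 (abs_le.1 (by exact_mod_cast this))
  simp only [freqBox, Finset.mem_filter, Finset.mem_product, Fintype.mem_piFinset]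
  refine ⟨⟨fun i => Finset.mem_Icc.2 (abs_le.1 (Int.le_floor.2 ?_)), hIcc _ _ hnL, hIcc _ _ hmL⟩,
    hk, hn, hm⟩
  exact_mod_cast hkK i

theorem biUnion_subset_biUnion_freqBox {X : Type*} {d : ℕ} {K N : ℝ} (hK : 0 ≤ K)
    (S : (Fin d → ℤ) → ℤ → ℤ → Set X)
    (hS : ∀ (k : Fin d → ℤ) (n m : ℤ), n ≠ 0 → m ≠ 0 → N ≤ |(n : ℝ)| → N ≤ |(m : ℝ)| →
      (|n - m| : ℝ) ≤ K → S k n m = ∅) :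
    (⋃ k ∈ {k : Fin d → ℤ | k ≠ 0 ∧ ∀ i, (|k i| : ℝ) ≤ K},
      ⋃ n ∈ {n : ℤ | n ≠ 0}, ⋃ m ∈ {m : ℤ | m ≠ 0 ∧ |n| ≠ |m| ∧ (|n - m| : ℝ) ≤ K}, S k n m) ⊆
      ⋃ t ∈ freqBox d K (N + K), S t.1 t.2.1 t.2.2 := by
  intro ξ hξ
  simp only [Set.mem_iUnion, Set.mem_ofPred_eq] at hξ
  obtain ⟨k, ⟨hk, hkK⟩, n, hn, m, ⟨hm, -, hnm⟩, hξ⟩ := hξ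
  have hsmall : |(n : ℝ)| < N ∨ |(m : ℝ)| < N := by
    by_contra! h
    rw [hS k n m hn hm h.1 h.2 hnm] at hξ
    exact hξ
  have h₁ := abs_sub_abs_le_abs_sub (n : ℝ) m
  have h₂ := abs_sub_abs_le_abs_sub (m : ℝ) n
  rw [abs_sub_comm] at h₂
  refine Set.mem_biUnion (mem_freqBox hk hn hm hkK ?_ ?_) hξ <;>
    rcases hsmall with h | h <;> linarith

theorem stmt_12 (d : ℕ) (hd : 1 ≤ d) (α τ₁ ρ M : ℝ)
    (hα0 : 0 < α) (hα1 : α < 1) (hτ₁ : τ₁ > d + 2) (hρ : 0 < ρ) (hM : 0 < M) :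
    ∃ C : ℝ, 0 < C ∧
      ∀ (β ς τ lam γ ε K : ℝ),
        0 < β → 1 ≤ α + β →
        ς = (τ₁ + 1) / (1 - α) → τ = 12 * τ₁ + 16 * ς →
        0 < γ → γ ≤ 1 → 0 ≤ ε → 2 ≤ K →
        ε ≤ γ / 8 → ε * M ≤ 1 / 4 → γ * K ^ τ₁ ≥ 8 →
      ∀ (O : Set (EuclideanSpace ℝ (Fin d))), MeasurableSet O →
      ∀ ω : EuclideanSpace ℝ (Fin d) → EuclideanSpace ℝ (Fin d),
        (∀ ξ ∈ O, ‖ω ξ‖ ≤ ρ) →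
        (∀ ξ ∈ O, ∀ η ∈ O, ‖ξ - η‖ ≤ M * ‖ω ξ - ω η‖) →
      ∀ Ω : ℤ → EuclideanSpace ℝ (Fin d) → ℝ,
        (∀ n : ℤ, n ≠ 0 → ∀ ξ ∈ O, |Ω n ξ - (|n| : ℝ) ^ α - lam| ≤ ε * (|n| : ℝ) ^ (-(2 * β))) →
        (∀ n : ℤ, n ≠ 0 → ∀ ξ ∈ O, ∀ η ∈ O,
          |Ω n ξ - Ω n η| ≤ ε * (|n| : ℝ) ^ (-(2 * β)) * ‖ξ - η‖) →
        volume (⋃ k ∈ {k : Fin d → ℤ | k ≠ 0 ∧ ∀ i, (|k i| : ℝ) ≤ K},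
            ⋃ n ∈ {n : ℤ | n ≠ 0}, ⋃ m ∈ {m : ℤ | m ≠ 0 ∧ |n| ≠ |m| ∧ (|n - m| : ℝ) ≤ K},
            {ξ ∈ O |
              |∑ i, (k i : ℝ) * ω ξ i| ≥ γ * K ^ (-τ₁) ∧
              |(∑ i, (k i : ℝ) * ω ξ i) + Ω n ξ - Ω m ξ| ≤ γ * K ^ (-τ)}) ≤
          ENNReal.ofReal (C * γ ^ ((1 : ℝ) / 4) * K ^ (-τ₁)) := by
  set V := (volume (ball (0 : EuclideanSpace ℝ (Fin d)) 1)).toReal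
  have hV : 0 < V := ENNReal.toReal_pos (measure_ball_pos _ _ one_pos).ne' measure_ball_lt_top.ne
  refine ⟨49 * 3 ^ d * ((1 + ρ / 4) ^ (d - 1) * (16 * M) ^ d * V), by positivity, ?_⟩
  intro β ς τ lam γ ε K _ hαβ hς hτ hγ hγ1 hε hK hεγ hεM hγK O _ ω hωρ hωM Ω hΩ hΩlip
  have hτ₁0 : 0 < τ₁ := by linarith [(Nat.cast_nonneg d : (0 : ℝ) ≤ d)]
  have hς0 : 0 ≤ ς := by rw [hς]; exact div_nonneg (by linarith) (by linarith)
  have hb : 0 < γ * K ^ (-τ) := by positivity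
  have hb1 : γ * K ^ (-τ) ≤ 1 := mul_le_one₀ hγ1 (by positivity)
    (Real.rpow_le_one_of_one_le_of_nonpos (by linarith) (by rw [hτ]; linarith))
  have hlip (n : ℤ) (hn : n ≠ 0) : ∀ ξ ∈ O, ∀ η ∈ O, |Ω n ξ - Ω n η| ≤ ε * ‖ξ - η‖ :=
    fun ξ hξ η hη => (hΩlip n hn ξ hξ η hη).trans <| mul_le_mul_of_nonneg_right
      (mul_le_of_le_one_right hε (rpow_neg_abs_intCast_le_one hn (by linarith))) (norm_nonneg _)
  have hcover := biUnion_subset_biUnion_freqBox (K := K) (N := K ^ (τ₁ + 2 * ς)) (by linarith)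
    (resonantSet O ω Ω (γ * K ^ (-τ₁)) (γ * K ^ (-τ))) fun k n m hn hm hnN hmN hnm =>
      resonantSet_eq_empty_of_le_abs hα0.le hα1 hαβ hτ₁0 hς hτ hγ hε hεγ hK hγK hΩ hn hm hnN hmN
        hnm k
  have hcard := card_freqBox_le (d := d) (by linarith : 0 ≤ K)
    (by positivity : 0 ≤ K ^ (τ₁ + 2 * ς) + K)
  refine ((measure_mono hcover).trans (measure_biUnion_finset_le _ _)).trans ?_
  calc ∑ t ∈ freqBox d K (K ^ (τ₁ + 2 * ς) + K),
        volume (resonantSet O ω Ω (γ * K ^ (-τ₁)) (γ * K ^ (-τ)) t.1 t.2.1 t.2.2)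
      ≤ (freqBox d K (K ^ (τ₁ + 2 * ς) + K)).card *
          ENNReal.ofReal ((1 + ρ / 4) ^ (d - 1) * (16 * M) ^ d * V * (γ * K ^ (-τ))) := by
        refine (Finset.sum_le_card_nsmul _ _ _ fun t ht => ?_).trans_eq (nsmul_eq_mul _ _)
        obtain ⟨hk, hn, hm⟩ := ne_zero_of_mem_freqBox ht
        exact volume_resonantSet_le hd hk hM hρ.le hb hb1 hε hεM hωρ hωM (hlip _ hn) (hlip _ hm)
    _ ≤ ENNReal.ofReal ((2 * K + 1) ^ d * (2 * (K ^ (τ₁ + 2 * ς) + K) + 3) ^ 2 *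
          ((1 + ρ / 4) ^ (d - 1) * (16 * M) ^ d * V * (γ * K ^ (-τ)))) := by
        rw [← ENNReal.ofReal_natCast, ← ENNReal.ofReal_mul (Nat.cast_nonneg _)]
        exact ENNReal.ofReal_le_ofReal (mul_le_mul_of_nonneg_right hcard (by positivity))
    _ ≤ _ := ENNReal.ofReal_le_ofReal <| by
        convert box_count_mul_le hτ₁ hς0 hτ hγ hγ1 hK
          (by positivity : 0 ≤ (1 + ρ / 4) ^ (d - 1) * (16 * M) ^ d * V) using 1
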